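/- arXiv:2110.06114 — 6 statements merged into one kernel-verified Lean document; each statement's English description precedes it below -/
import Mathlib

section
/- Let F be a k×p real matrix of rank p, let Σγ be a nonnegative definite (positive semidefinite) p×p real matrix, let Σε be a positive definite k×k real matrix, set V = F Σγ Fᵀ + Σε and M = Fᵀ V⁻¹ F. Then M is invertible and M⁻¹ = (Fᵀ Σε⁻¹ F)⁻¹ + Σγ. -/
/-!
Write `A = Fᵀ Σε⁻¹ F`. Expanding `V = F Σγ Fᵀ + Σε` gives `V Σε⁻¹ F = F (Σγ A + 1)`, so
`A = Fᵀ V⁻¹ F (Σγ A + 1) = M (Σγ A + 1)` and therefore `M (Σγ + A⁻¹) = 1`. The inverses used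
exist because `V` and `A` are positive definite, the latter since full column rank makes `F`
injective.
-/

open Matrix

namespace Matrix

theorem mulVec_injective_of_rank_eq_card {K m n : Type*} [Field K] [Fintype n]
    {A : Matrix m n K} (h : A.rank = Fintype.card n) : Function.Injective A.mulVec := by
  rw [mulVec_injective_iff, linearIndependent_iff_card_eq_finrank_span, Set.finrank,
    ← rank_eq_finrank_span_cols, h]

variable {α m n : Type*} [CommRing α] [Fintype m] [DecidableEq m] [Fintype n] [DecidableEq n]

theorem mul_inv_mul_mul_add_inv_eq_one (F : Matrix m n α) (G : Matrix n m α) (S : Matrix n n α)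
    {E : Matrix m m α} (hE : IsUnit E) (hV : IsUnit (F * S * G + E))
    (hA : IsUnit (G * E⁻¹ * F)) :
    G * (F * S * G + E)⁻¹ * F * (S + (G * E⁻¹ * F)⁻¹) = 1 := by
  set V := F * S * G + E
  set A := G * E⁻¹ * F
  rw [isUnit_iff_isUnit_det] at hE hV hA
  have hVEF : V * (E⁻¹ * F) = F * (S * A + 1) := by
    simp only [V, A, Matrix.add_mul, Matrix.mul_add, Matrix.mul_assoc,
      mul_nonsing_inv_cancel_left E F hE, Matrix.mul_one]
  have hA_eq : A = G * V⁻¹ * F * (S * A + 1) := by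
    rw [Matrix.mul_assoc (G * V⁻¹), ← hVEF, Matrix.mul_assoc G,
      nonsing_inv_mul_cancel_left V _ hV]
    exact Matrix.mul_assoc G E⁻¹ F
  calc G * V⁻¹ * F * (S + A⁻¹) = G * V⁻¹ * F * (S * A + 1) * A⁻¹ := by
        rw [Matrix.mul_assoc _ (S * A + 1), Matrix.add_mul, Matrix.one_mul,
          Matrix.mul_assoc S, mul_nonsing_inv _ hA, Matrix.mul_one]
    _ = 1 := by rw [← hA_eq, mul_nonsing_inv _ hA]

end Matrix

/-- Lemma 1: representation of the inverse information matrix in a linear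
mixed effects model with random-effects covariance `Sγ` and
measurement-error covariance `Sε`. -/
theorem inv_info_repr {k p : ℕ} (F : Matrix (Fin k) (Fin p) ℝ)
    (Sγ : Matrix (Fin p) (Fin p) ℝ) (Sε : Matrix (Fin k) (Fin k) ℝ)
    (hF : F.rank = p) (hγ : Sγ.PosSemidef) (hε : Sε.PosDef)
    (V : Matrix (Fin k) (Fin k) ℝ) (hV : V = F * Sγ * Fᵀ + Sε)
    (M : Matrix (Fin p) (Fin p) ℝ) (hM : M = Fᵀ * V⁻¹ * F) :
    IsUnit M ∧ M⁻¹ = (Fᵀ * Sε⁻¹ * F)⁻¹ + Sγ := by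
  subst hV hM
  have hFinj : Function.Injective F.mulVec :=
    mulVec_injective_of_rank_eq_card (hF.trans (Fintype.card_fin p).symm)
  have hV : (F * Sγ * Fᵀ + Sε).PosDef := by
    simpa only [conjTranspose_eq_transpose_of_trivial] using
      PosDef.posSemidef_add (hγ.mul_mul_conjTranspose_same F) hε
  have hA : (Fᵀ * Sε⁻¹ * F).PosDef := by
    simpa only [conjTranspose_eq_transpose_of_trivial] using
      hε.inv.conjTranspose_mul_mul_same hFinj
  have hinv := mul_inv_mul_mul_add_inv_eq_one F Fᵀ Sγ hε.isUnit hV.isUnit hA.isUnit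
  exact ⟨(isUnit_iff_isUnit_det _).2 (isUnit_det_of_right_inverse hinv),
    by rw [inv_eq_right_inv hinv, add_comm]⟩
end

section
/- Let F₂ be a k×p₂ real matrix of rank p₂, Σγ a positive semidefinite p₂×p₂ real matrix, Σε a positive definite k×k real matrix, V = F₂ Σγ F₂ᵀ + Σε, and M₂ = F₂ᵀ V⁻¹ F₂. Then for every vector f ∈ ℝ^{p₂}, fᵀ M₂⁻¹ f = fᵀ (F₂ᵀ Σε⁻¹ F₂)⁻¹ f + fᵀ Σγ f. -/
open Matrix

/-!
Put `A = F₂ᵀ Sε⁻¹ F₂`. Since `V (Sε⁻¹ F₂) = F₂ (1 + Sγ A) = F₂ (A⁻¹ + Sγ) A`, we get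
`M₂ (A⁻¹ + Sγ) A = F₂ᵀ V⁻¹ V Sε⁻¹ F₂ = A`, hence `M₂⁻¹ = A⁻¹ + Sγ`; this needs no invertibility
of `Sγ`, unlike the Woodbury identity.
-/

namespace Matrix

theorem mulVec_injective_iff_rank_eq {m n R : Type*} [Fintype n] [Field R] (A : Matrix m n R) :
    Function.Injective A.mulVec ↔ A.rank = Fintype.card n := by
  rw [mulVec_injective_iff, linearIndependent_iff_card_eq_finrank_span,
    rank_eq_finrank_span_cols, eq_comm, Set.finrank]

theorem inv_mul_inv_add_mul_eq_inv_add {m n R : Type*} [Fintype m] [Fintype n] [DecidableEq m]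
    [DecidableEq n] [CommRing R] (W : Matrix n m R) (U : Matrix m n R) (G : Matrix n n R)
    (S : Matrix m m R) (hS : IsUnit S.det) (hA : IsUnit (W * S⁻¹ * U).det)
    (hV : IsUnit (U * G * W + S).det) :
    (W * (U * G * W + S)⁻¹ * U)⁻¹ = (W * S⁻¹ * U)⁻¹ + G := by
  set A := W * S⁻¹ * U
  have hVSU : (U * G * W + S) * (S⁻¹ * U) = U * (1 + G * A) := by
    rw [Matrix.add_mul, mul_nonsing_inv_cancel_left _ _ hS, Matrix.mul_add, Matrix.mul_one,
      add_comm]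
    simp only [A, Matrix.mul_assoc]
  have hA_fixed : W * (U * G * W + S)⁻¹ * U * (A⁻¹ + G) * A = A := calc
    _ = W * (U * G * W + S)⁻¹ * (U * (1 + G * A)) := by
      rw [Matrix.mul_assoc _ _ A, Matrix.add_mul, nonsing_inv_mul _ hA, Matrix.mul_assoc]
    _ = A := by
      rw [← hVSU, Matrix.mul_assoc W, nonsing_inv_mul_cancel_left _ _ hV, ← Matrix.mul_assoc]
  refine inv_eq_right_inv ?_
  calc _ = W * (U * G * W + S)⁻¹ * U * (A⁻¹ + G) * A * A⁻¹ := by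
        rw [Matrix.mul_assoc _ A, mul_nonsing_inv _ hA, Matrix.mul_one]
    _ = 1 := by rw [hA_fixed, mul_nonsing_inv _ hA]

end Matrix

/-- Decomposition of the marginal `c`-criterion in the mixed effects model in
the time variable: `fᵀ M₂⁻¹ f = fᵀ (F₂ᵀ Sε⁻¹ F₂)⁻¹ f + fᵀ Sγ f`. -/
theorem c_criterion_decomposition {k p₂ : ℕ} (F₂ : Matrix (Fin k) (Fin p₂) ℝ)
    (Sγ : Matrix (Fin p₂) (Fin p₂) ℝ) (Sε : Matrix (Fin k) (Fin k) ℝ)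
    (hF : F₂.rank = p₂) (hγ : Sγ.PosSemidef) (hε : Sε.PosDef)
    (V : Matrix (Fin k) (Fin k) ℝ) (hV : V = F₂ * Sγ * F₂ᵀ + Sε)
    (M₂ : Matrix (Fin p₂) (Fin p₂) ℝ) (hM : M₂ = F₂ᵀ * V⁻¹ * F₂) :
    ∀ f : Fin p₂ → ℝ,
      f ⬝ᵥ (M₂⁻¹ *ᵥ f) = f ⬝ᵥ ((F₂ᵀ * Sε⁻¹ * F₂)⁻¹ *ᵥ f) + f ⬝ᵥ (Sγ *ᵥ f) := by
  intro f
  have hF_inj : Function.Injective F₂.mulVec := by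
    rwa [mulVec_injective_iff_rank_eq, Fintype.card_fin]
  have hA : (F₂ᵀ * Sε⁻¹ * F₂).PosDef := by
    simpa using hε.inv.conjTranspose_mul_mul_same hF_inj
  have hV_pos : (F₂ * Sγ * F₂ᵀ + Sε).PosDef := by
    have h := hγ.mul_mul_conjTranspose_same F₂
    rw [conjTranspose_eq_transpose_of_trivial] at h
    exact PosDef.posSemidef_add h hε
  subst hV hM
  rw [inv_mul_inv_add_mul_eq_inv_add F₂ᵀ F₂ Sγ Sε hε.det_pos.ne'.isUnit hA.det_pos.ne'.isUnit
    hV_pos.det_pos.ne'.isUnit, add_mulVec, dotProduct_add]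
end

section
/- Let δ₁, δ₂, y₀, σ₁, σ₂, ρ be real numbers with σ₁ > 0, σ₂ ≥ 0, 0 ≤ ρ ≤ 1, δ₂ > 0 and δ₁ < y₀, and define h(t) = (δ₂ t + δ₁ − y₀)/√(σ₁² + 2ρσ₁σ₂ t + σ₂² t²) for t ≥ 0. Then h is strictly increasing on [0, ∞). -/
private lemma key_sq_ineq (δ₂ c σ₁ σ₂ ρ s t : ℝ)
    (hσ₁ : 0 < σ₁) (hσ₂ : 0 ≤ σ₂) (hρ₀ : 0 ≤ ρ) (hδ₂ : 0 < δ₂)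
    (hcneg : c < 0) (hs : 0 ≤ s) (hst : s < t) (hc : -c ≤ δ₂ * s) :
    (δ₂*s + c)^2 * (σ₁^2 + 2*ρ*σ₁*σ₂*t + σ₂^2*t^2)
      < (δ₂*t + c)^2 * (σ₁^2 + 2*ρ*σ₁*σ₂*s + σ₂^2*s^2) := by
  have ht : 0 ≤ t := le_of_lt (lt_of_le_of_lt hs hst)
  have hts : (0:ℝ) < t - s := sub_pos.mpr hst
  have f1 : 0 < σ₁^2 * δ₂ * (δ₂*(t+s) + 2*c) := by
    have hX : 0 < δ₂*(t+s) + 2*c := by nlinarith [mul_pos hδ₂ hts]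
    exact mul_pos (by positivity) hX
  have f2 : 0 ≤ 2*ρ*σ₁*σ₂ * (δ₂^2*s*t - c^2) := by
    apply mul_nonneg (by positivity)
    have h1 : 0 ≤ δ₂*s + c := by linarith
    have h2 : 0 ≤ δ₂*s - c := by linarith
    nlinarith [mul_nonneg h1 h2, mul_nonneg (mul_nonneg (sq_nonneg δ₂) hs) hts.le]
  have f3 : 0 ≤ (-c) * σ₂^2 * (2*δ₂*s*t + c*(s+t)) := by
    apply mul_nonneg (mul_nonneg (by linarith) (sq_nonneg σ₂))
    nlinarith [mul_nonneg (mul_nonneg hδ₂.le hs) hts.le]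
  nlinarith [mul_pos hts f1, mul_nonneg hts.le f2, mul_nonneg hts.le f3]

/-- With nonnegative correlation `ρ` of the random intercept and slope, the
function `h` is strictly increasing on `[0, ∞)`. -/
theorem h_strictMonoOn
    (δ₁ δ₂ y₀ σ₁ σ₂ ρ : ℝ)
    (hσ₁ : 0 < σ₁) (hσ₂ : 0 ≤ σ₂) (hρ₀ : 0 ≤ ρ) (hρ₁ : ρ ≤ 1)
    (hδ₂ : 0 < δ₂) (hδ₁ : δ₁ < y₀)
    (h : ℝ → ℝ)
    (hh : ∀ t, h t = (δ₂ * t + δ₁ - y₀) / Real.sqrt (σ₁^2 + 2*ρ*σ₁*σ₂*t + σ₂^2*t^2)) :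
    StrictMonoOn h (Set.Ici 0) := by
  intro s hs t ht hst
  simp only [Set.mem_Ici] at hs ht
  rw [hh s, hh t]
  set Qs := σ₁^2 + 2*ρ*σ₁*σ₂*s + σ₂^2*s^2 with hQs
  set Qt := σ₁^2 + 2*ρ*σ₁*σ₂*t + σ₂^2*t^2 with hQt
  have hQsp : 0 < Qs := by positivity
  have hQtp : 0 < Qt := by positivity
  have hsQs : 0 < Real.sqrt Qs := Real.sqrt_pos.mpr hQsp
  have hsQt : 0 < Real.sqrt Qt := Real.sqrt_pos.mpr hQtp
  rw [div_lt_div_iff₀ hsQs hsQt]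
  set a := δ₂ * s + δ₁ - y₀ with ha
  set b := δ₂ * t + δ₁ - y₀ with hb
  have hab : a < b := by simp only [ha, hb]; nlinarith
  rcases lt_or_ge a 0 with hneg | hpos
  · -- a < 0 : use monotonicity of Q
    have hQle : Qs ≤ Qt := by
      simp only [hQs, hQt]
      nlinarith [mul_nonneg (mul_nonneg hρ₀ (mul_nonneg hσ₁.le hσ₂)) (sub_nonneg.mpr hst.le),
        mul_nonneg (mul_nonneg hσ₂ hσ₂)
          (mul_nonneg (add_nonneg hs ht) (sub_nonneg.mpr hst.le))]
    have h1 : a * Real.sqrt Qt ≤ a * Real.sqrt Qs :=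
      mul_le_mul_of_nonpos_left (Real.sqrt_le_sqrt hQle) hneg.le
    have h2 : a * Real.sqrt Qs < b * Real.sqrt Qs :=
      mul_lt_mul_of_pos_right hab hsQs
    linarith
  · -- 0 ≤ a : compare squares
    have hbpos : 0 < b := lt_of_le_of_lt hpos hab
    have hsq : (a * Real.sqrt Qt)^2 < (b * Real.sqrt Qs)^2 := by
      have e1 : (a * Real.sqrt Qt)^2 = a^2 * Qt := by
        rw [mul_pow, Real.sq_sqrt hQtp.le]
      have e2 : (b * Real.sqrt Qs)^2 = b^2 * Qs := by
        rw [mul_pow, Real.sq_sqrt hQsp.le]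
      rw [e1, e2]
      have hpos' : -(δ₁ - y₀) ≤ δ₂ * s := by simp only [ha] at hpos; linarith
      have := key_sq_ineq δ₂ (δ₁ - y₀) σ₁ σ₂ ρ s t hσ₁ hσ₂ hρ₀ hδ₂
        (by linarith) hs hst hpos'
      simp only [ha, hb, hQs, hQt]
      convert this using 2 <;> ring
    have := lt_of_pow_lt_pow_left₀ 2 (mul_nonneg hbpos.le hsQs.le) hsq
    exact this
end

section
/- Let δ₁, δ₂, y₀, σ₁, σ₂, ρ be real numbers with σ₁ > 0, σ₂ > 0, 0 ≤ ρ ≤ 1, δ₂ > 0 and δ₁ < y₀, and define h(t) = (δ₂ t + δ₁ − y₀)/√(σ₁² + 2ρσ₁σ₂ t + σ₂² t²) for t ≥ 0. Then for every real z with (δ₁ − y₀)/σ₁ < z < δ₂/σ₂ there exists a unique t ≥ 0 with h(t) = z; moreover h(t) < δ₂/σ₂ for all t ≥ 0. -/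
set_option maxHeartbeats 1000000 in
/-- For every `z` strictly between `h(0) = (δ₁ − y₀)/σ₁` and the limiting
value `δ₂/σ₂` there is a unique nonnegative `t` with `h(t) = z`; moreover `h`
stays strictly below `δ₂/σ₂`. -/
theorem quantile_exists_unique
    (δ₁ δ₂ y₀ σ₁ σ₂ ρ : ℝ)
    (hσ₁ : 0 < σ₁) (hσ₂ : 0 < σ₂) (hρ₀ : 0 ≤ ρ) (hρ₁ : ρ ≤ 1)
    (hδ₂ : 0 < δ₂) (hδ₁ : δ₁ < y₀)
    (h : ℝ → ℝ)
    (hh : ∀ t, h t = (δ₂ * t + δ₁ - y₀) / Real.sqrt (σ₁^2 + 2*ρ*σ₁*σ₂*t + σ₂^2*t^2)) :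
    (∀ z : ℝ, (δ₁ - y₀) / σ₁ < z → z < δ₂ / σ₂ →
        ∃! t : ℝ, 0 ≤ t ∧ h t = z) ∧
      ∀ t ≥ (0 : ℝ), h t < δ₂ / σ₂ := by
  have hQpos : ∀ t : ℝ, 0 ≤ t → 0 < σ₁^2 + 2*ρ*σ₁*σ₂*t + σ₂^2*t^2 := by
    intro t ht
    have : 0 ≤ 2*ρ*σ₁*σ₂*t :=
      mul_nonneg (mul_nonneg (mul_nonneg (by linarith) hσ₁.le) hσ₂.le) ht
    nlinarith [sq_nonneg (σ₂*t), sq_nonneg σ₁]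
  have hsq : ∀ t : ℝ, 0 ≤ t → 0 < Real.sqrt (σ₁^2 + 2*ρ*σ₁*σ₂*t + σ₂^2*t^2) :=
    fun t ht => Real.sqrt_pos.2 (hQpos t ht)
  have hsqsq : ∀ t : ℝ, 0 ≤ t →
      Real.sqrt (σ₁^2 + 2*ρ*σ₁*σ₂*t + σ₂^2*t^2) ^ 2 = σ₁^2 + 2*ρ*σ₁*σ₂*t + σ₂^2*t^2 :=
    fun t ht => Real.sq_sqrt (hQpos t ht).le
  -- strict monotonicity on [0, ∞)
  have hmono : ∀ s t : ℝ, 0 ≤ s → s < t → h s < h t := by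
    intro s t hs hst
    have ht0 : 0 ≤ t := hs.trans hst.le
    rw [hh s, hh t, div_lt_div_iff₀ (hsq s hs) (hsq t ht0)]
    have hQlt : σ₁^2 + 2*ρ*σ₁*σ₂*s + σ₂^2*s^2 < σ₁^2 + 2*ρ*σ₁*σ₂*t + σ₂^2*t^2 := by
      nlinarith [mul_nonneg (mul_nonneg (mul_nonneg (by linarith : (0:ℝ) ≤ 2*ρ) hσ₁.le) hσ₂.le) (sub_pos.2 hst).le,
        mul_pos (mul_pos hσ₂ hσ₂) (mul_pos (sub_pos.2 hst) (show (0:ℝ) < t + s by linarith))]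
    have hsqlt : Real.sqrt (σ₁^2 + 2*ρ*σ₁*σ₂*s + σ₂^2*s^2)
        < Real.sqrt (σ₁^2 + 2*ρ*σ₁*σ₂*t + σ₂^2*t^2) :=
      Real.sqrt_lt_sqrt (hQpos s hs).le hQlt
    have hab : δ₂*s + δ₁ - y₀ < δ₂*t + δ₁ - y₀ := by nlinarith
    by_cases hb : δ₂*t + δ₁ - y₀ ≤ 0
    · nlinarith [hsq s hs, hsq t ht0,
        mul_pos (sub_pos.2 hab) (hsq t ht0),
        mul_nonneg (neg_nonneg.2 hb) (sub_nonneg.2 hsqlt.le)]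
    · push_neg at hb
      by_cases ha : δ₂*s + δ₁ - y₀ ≤ 0
      · nlinarith [hsq s hs, hsq t ht0,
          mul_pos hb (hsq s hs),
          mul_nonneg (neg_nonneg.2 ha) (hsq t ht0).le]
      · push_neg at ha
        apply lt_of_pow_lt_pow_left₀ 2 (mul_nonneg hb.le (hsq s hs).le)
        rw [mul_pow, mul_pow, hsqsq s hs, hsqsq t ht0]
        have hs0 : 0 < s := by nlinarith
        have hds : 0 < δ₂ * s := mul_pos hδ₂ hs0
        have k1 : 0 < δ₂*(t+s) + 2*(δ₁ - y₀) := by linarith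
        have k2 : 0 < δ₂^2*(t*s) - (δ₁ - y₀)^2 := by
          nlinarith [mul_pos (sub_pos.2 hδ₁) ha, mul_pos hds hb]
        have k3 : 0 < 2*δ₂*s*t + (δ₁ - y₀)*(s+t) := by
          nlinarith [mul_pos hs0 hb, mul_pos (hs0.trans hst) ha]
        nlinarith [mul_pos (sub_pos.2 hst) (mul_pos (mul_pos (mul_pos hσ₁ hσ₁) hδ₂) k1),
          sq_nonneg (δ₂*s + δ₁ - y₀), sq_nonneg (δ₂*t + δ₁ - y₀),
          mul_nonneg (mul_nonneg (mul_nonneg hρ₀ hσ₁.le) hσ₂.le)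
            (mul_pos (sub_pos.2 hst) k2).le,
          mul_pos (sub_pos.2 hst) (mul_pos (mul_pos (mul_pos hσ₂ hσ₂) (sub_pos.2 hδ₁)) k3)]
  -- the bound h t < δ₂ / σ₂
  have hbound : ∀ t : ℝ, 0 ≤ t → h t < δ₂ / σ₂ := by
    intro t ht
    rw [hh t, div_lt_div_iff₀ (hsq t ht) hσ₂]
    by_cases hN : δ₂*t + δ₁ - y₀ ≤ 0
    · have : 0 < δ₂ * Real.sqrt (σ₁^2 + 2*ρ*σ₁*σ₂*t + σ₂^2*t^2) := mul_pos hδ₂ (hsq t ht)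
      nlinarith [hsq t ht]
    · push_neg at hN
      apply lt_of_pow_lt_pow_left₀ 2 (mul_pos hδ₂ (hsq t ht)).le
      rw [mul_pow, mul_pow, hsqsq t ht]
      have k : 0 < 2*δ₂*t + (δ₁ - y₀) := by nlinarith [mul_nonneg hδ₂.le ht]
      nlinarith [mul_nonneg (mul_nonneg (mul_nonneg hρ₀ (mul_pos hδ₂ hδ₂).le) hσ₁.le)
          (mul_nonneg hσ₂.le ht),
        mul_pos (mul_pos (mul_pos hσ₂ hσ₂) (sub_pos.2 hδ₁)) k,
        mul_pos (mul_pos hδ₂ hδ₂) (mul_pos hσ₁ hσ₁)]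
  -- value at 0
  have h0 : h 0 = (δ₁ - y₀) / σ₁ := by
    have e : σ₁^2 + 2*ρ*σ₁*σ₂*0 + σ₂^2*0^2 = σ₁^2 := by ring
    rw [hh 0, e, Real.sqrt_sq hσ₁.le]
    ring_nf
  refine ⟨?_, fun t ht => hbound t ht⟩
  intro z hz1 hz2
  -- existence of a point T with h T > z
  obtain ⟨T, hT0, hTz⟩ : ∃ T : ℝ, 0 ≤ T ∧ z < h T := by
    rcases le_or_gt z 0 with hz0 | hz0
    · have hTpos : (0:ℝ) < (y₀ - δ₁ + 1)/δ₂ := div_pos (by linarith) hδ₂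
      refine ⟨(y₀ - δ₁ + 1)/δ₂, hTpos.le, ?_⟩
      rw [hh]
      have hN : δ₂ * ((y₀ - δ₁ + 1)/δ₂) + δ₁ - y₀ = 1 := by field_simp; ring
      rw [hN]
      have := hsq ((y₀ - δ₁ + 1)/δ₂) hTpos.le
      calc z ≤ 0 := hz0
        _ < 1 / Real.sqrt (σ₁^2 + 2*ρ*σ₁*σ₂*((y₀ - δ₁ + 1)/δ₂) + σ₂^2*((y₀ - δ₁ + 1)/δ₂)^2) :=
          by positivity
    · have hA : 0 < δ₂^2 - z^2*σ₂^2 := by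
        have hzs : z*σ₂ < δ₂ := (lt_div_iff₀ hσ₂).1 hz2
        nlinarith [mul_pos (sub_pos.2 hzs) (show (0:ℝ) < δ₂ + z*σ₂ by nlinarith [mul_pos hz0 hσ₂])]
      set B : ℝ := 2*(δ₂*(δ₁ - y₀) - z^2*ρ*σ₁*σ₂) with hB
      set D : ℝ := (δ₁ - y₀)^2 - z^2*σ₁^2 with hD
      set T : ℝ := max 1 (max ((y₀ - δ₁ + 1)/δ₂) ((|B| + |D| + 1)/(δ₂^2 - z^2*σ₂^2))) with hT
      have hT1 : (1:ℝ) ≤ T := le_max_left _ _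
      have hT0 : (0:ℝ) ≤ T := by linarith
      have hTc : (y₀ - δ₁ + 1)/δ₂ ≤ T := le_trans (le_max_left _ _) (le_max_right _ _)
      have hTb : (|B| + |D| + 1)/(δ₂^2 - z^2*σ₂^2) ≤ T :=
        le_trans (le_max_right _ _) (le_max_right _ _)
      have hNT : 0 < δ₂*T + δ₁ - y₀ := by
        have := (div_le_iff₀ hδ₂).1 hTc
        nlinarith
      have h1 : |B| + |D| + 1 ≤ (δ₂^2 - z^2*σ₂^2) * T := by
        have := (div_le_iff₀ hA).1 hTb
        linarith
      have hquad : 0 < (δ₂^2 - z^2*σ₂^2)*T^2 + B*T + D := by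
        nlinarith [mul_le_mul_of_nonneg_right h1 hT0,
          mul_le_mul_of_nonneg_right (neg_abs_le B) hT0,
          mul_le_mul_of_nonneg_left hT1 (abs_nonneg D),
          neg_abs_le D, abs_nonneg B, abs_nonneg D]
      refine ⟨T, hT0, ?_⟩
      rw [hh, lt_div_iff₀ (hsq T hT0)]
      apply lt_of_pow_lt_pow_left₀ 2 hNT.le
      rw [mul_pow, hsqsq T hT0]
      rw [hB, hD] at hquad
      nlinarith [hquad]
  -- intermediate value theorem
  have hcont : ContinuousOn h (Set.Icc 0 T) := by
    have hc : ContinuousOn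
        (fun t => (δ₂ * t + δ₁ - y₀) / Real.sqrt (σ₁^2 + 2*ρ*σ₁*σ₂*t + σ₂^2*t^2))
        (Set.Icc 0 T) := by
      apply ContinuousOn.div
      · exact (Continuous.continuousOn (by continuity))
      · exact (Real.continuous_sqrt.comp (by continuity)).continuousOn
      · intro x hx
        exact (hsq x hx.1).ne'
    exact hc.congr (fun x _ => hh x)
  have hzmem : z ∈ Set.Icc (h 0) (h T) := ⟨by rw [h0]; exact hz1.le, hTz.le⟩
  obtain ⟨t, htmem, hteq⟩ := intermediate_value_Icc hT0 hcont hzmem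
  refine ⟨t, ⟨htmem.1, hteq⟩, ?_⟩
  rintro t' ⟨ht'0, ht'eq⟩
  by_contra hne
  rcases lt_or_gt_of_ne hne with hlt | hlt
  · exact absurd (ht'eq.trans hteq.symm) (ne_of_lt (hmono t' t ht'0 hlt))
  · exact absurd (hteq.trans ht'eq.symm) (ne_of_lt (hmono t t' htmem.1 hlt))
end

section
/- Let t* > 1 and σ₀, σ₁ > 0 be real, let f̃(t) = (1, t)ᵀ/σ(t) where σ(0) = σ₀ and σ(1) = σ₁, let c = (1, t*)ᵀ, and for π ∈ (0,1) let M(π) = (1−π)·f̃(0)f̃(0)ᵀ + π·f̃(1)f̃(1)ᵀ. Then M(π) is invertible with cᵀ M(π)⁻¹ c = (t*−1)²σ₀²/(1−π) + (t*)²σ₁²/π, and this quantity attains its minimum over π ∈ (0,1) uniquely at π* = t*σ₁/(t*σ₁ + (t*−1)σ₀), with minimal value (t*σ₁ + (t*−1)σ₀)². -/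
/-!
With `f̃(0) = (1,0)/σ₀` and `f̃(1) = (1,1)/σ₁`, the information matrix of the design is
`a·(1,0)(1,0)ᵀ + b·(1,1)(1,1)ᵀ` with `a = (1-π)/σ₀²`, `b = π/σ₁²`. Since
`c = (1-t)·(1,0) + t·(1,1)`, the `c`-criterion is `(t-1)²/a + t²/b`
(Elfving's theorem for two support points). Optimality is Cauchy–Schwarz in the form
`A²/(1-π) + B²/π - (A+B)² = ((A+B)π - B)²/(π(1-π))`.
-/

open Matrix

namespace TwoPointDesign

variable {K : Type*} [Field K]

def infoMatrix (a b : K) : Matrix (Fin 2) (Fin 2) K :=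
  a • vecMulVec ![1, 0] ![1, 0] + b • vecMulVec ![1, 1] ![1, 1]

theorem infoMatrix_eq (a b : K) : infoMatrix a b = !![a + b, b; b, b] := by
  ext i j
  fin_cases i <;> fin_cases j <;> simp [infoMatrix, vecMulVec]

theorem det_infoMatrix (a b : K) : (infoMatrix a b).det = a * b := by
  rw [infoMatrix_eq, det_fin_two_of]
  ring

theorem isUnit_infoMatrix {a b : K} (ha : a ≠ 0) (hb : b ≠ 0) : IsUnit (infoMatrix a b) := by
  rw [isUnit_iff_isUnit_det, det_infoMatrix]
  exact (mul_ne_zero ha hb).isUnit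

/-- The solution `v` has `(1,0) ⬝ᵥ v = (c₀ - c₁)/a` and `(1,1) ⬝ᵥ v = c₁/b`. -/
theorem infoMatrix_mulVec {a b : K} (ha : a ≠ 0) (hb : b ≠ 0) (c₀ c₁ : K) :
    infoMatrix a b *ᵥ ![(c₀ - c₁) / a, c₁ / b - (c₀ - c₁) / a] = ![c₀, c₁] := by
  rw [infoMatrix_eq]
  ext i
  fin_cases i <;>
    simp only [mulVec, dotProduct, Fin.sum_univ_two, Fin.zero_eta, Fin.mk_one, of_apply,
      cons_val', cons_val_fin_one, cons_val_zero, cons_val_one] <;>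
    field_simp <;> ring

theorem dotProduct_infoMatrix_inv_mulVec {a b : K} (ha : a ≠ 0) (hb : b ≠ 0) (c₀ c₁ : K) :
    ![c₀, c₁] ⬝ᵥ ((infoMatrix a b)⁻¹ *ᵥ ![c₀, c₁]) =
      (c₀ - c₁) ^ 2 / a + c₁ ^ 2 / b := by
  obtain ⟨_⟩ := (isUnit_infoMatrix ha hb).nonempty_invertible
  rw [inv_mulVec_eq_vec (infoMatrix_mulVec ha hb c₀ c₁).symm]
  simp only [dotProduct, Fin.sum_univ_two, cons_val_zero, cons_val_one]
  ring

end TwoPointDesign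

theorem div_add_mem_Ioo {A B : ℝ} (hA : 0 < A) (hB : 0 < B) : B / (B + A) ∈ Set.Ioo 0 1 :=
  ⟨by positivity, (div_lt_one (by positivity)).2 (by linarith)⟩

theorem sq_div_one_sub_add_sq_div_div_add {A B : ℝ} (hAB : B + A ≠ 0) :
    A ^ 2 / (1 - B / (B + A)) + B ^ 2 / (B / (B + A)) = (B + A) ^ 2 := by
  rw [one_sub_div hAB, add_sub_cancel_left]
  field_simp
  ring

theorem sq_div_one_sub_add_sq_div_sub_sq {A B π : ℝ} (hπ₀ : π ≠ 0)
    (hπ₁ : 1 - π ≠ 0) :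
    A ^ 2 / (1 - π) + B ^ 2 / π - (B + A) ^ 2 = ((B + A) * π - B) ^ 2 / (π * (1 - π)) := by
  field_simp
  ring

theorem sq_lt_sq_div_one_sub_add_sq_div {A B π : ℝ} (hAB : B + A ≠ 0)
    (hπ : π ∈ Set.Ioo 0 1) (hne : π ≠ B / (B + A)) :
    (B + A) ^ 2 < A ^ 2 / (1 - π) + B ^ 2 / π := by
  obtain ⟨hπ₀, hπ₁⟩ : 0 < π ∧ 0 < 1 - π := ⟨hπ.1, sub_pos.2 hπ.2⟩
  have hnum : (B + A) * π - B ≠ 0 := fun h => hne (by field_simp; linarith)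
  have hgap : 0 < ((B + A) * π - B) ^ 2 / (π * (1 - π)) :=
    div_pos (by positivity) (mul_pos hπ₀ hπ₁)
  linarith [sq_div_one_sub_add_sq_div_sub_sq (A := A) (B := B) hπ₀.ne' hπ₁.ne']

open TwoPointDesign in
/-- The `c`-optimal two-point design for extrapolation at `t* > 1` in the
weighted marginal model with regression `f̃(s) = (1,s)ᵀ/σ(s)`: the design with
weight `1−π` at `0` and `π` at `1` has `c`-criterion
`(t*−1)²σ₀²/(1−π) + (t*)²σ₁²/π`, minimized uniquely at
`π* = t*σ₁/(t*σ₁ + (t*−1)σ₀)` with minimal value `(t*σ₁ + (t*−1)σ₀)²`. -/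
theorem c_opt_two_point_design_weighted (t σ₀ σ₁ : ℝ)
    (ht : 1 < t) (hσ₀ : 0 < σ₀) (hσ₁ : 0 < σ₁)
    (σ : ℝ → ℝ) (hσ0 : σ 0 = σ₀) (hσ1 : σ 1 = σ₁)
    (ftil : ℝ → Fin 2 → ℝ) (hftil : ∀ s, ftil s = (σ s)⁻¹ • ![1, s])
    (c : Fin 2 → ℝ) (hc : c = ![1, t])
    (M : ℝ → Matrix (Fin 2) (Fin 2) ℝ)
    (hM : ∀ π, M π = (1 - π) • vecMulVec (ftil 0) (ftil 0)
            + π • vecMulVec (ftil 1) (ftil 1)) :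
    (∀ π ∈ Set.Ioo (0:ℝ) 1,
        IsUnit (M π) ∧
          c ⬝ᵥ ((M π)⁻¹ *ᵥ c) = (t - 1)^2 * σ₀^2 / (1 - π) + t^2 * σ₁^2 / π) ∧
      t * σ₁ / (t * σ₁ + (t - 1) * σ₀) ∈ Set.Ioo (0:ℝ) 1 ∧
      c ⬝ᵥ ((M (t * σ₁ / (t * σ₁ + (t - 1) * σ₀)))⁻¹ *ᵥ c)
          = (t * σ₁ + (t - 1) * σ₀)^2 ∧
      ∀ π ∈ Set.Ioo (0:ℝ) 1, π ≠ t * σ₁ / (t * σ₁ + (t - 1) * σ₀) →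
        c ⬝ᵥ ((M (t * σ₁ / (t * σ₁ + (t - 1) * σ₀)))⁻¹ *ᵥ c)
          < c ⬝ᵥ ((M π)⁻¹ *ᵥ c) := by
  have hM_eq : ∀ π, M π = infoMatrix ((1 - π) / σ₀ ^ 2) (π / σ₁ ^ 2) := fun π => by
    simp only [hM, hftil, hσ0, hσ1, infoMatrix, smul_vecMulVec, vecMulVec_smul, smul_smul]
    simp [div_eq_mul_inv, sq]
  have hcrit : ∀ π ∈ Set.Ioo (0:ℝ) 1, IsUnit (M π) ∧
      c ⬝ᵥ ((M π)⁻¹ *ᵥ c) = (t - 1)^2 * σ₀^2 / (1 - π) + t^2 * σ₁^2 / π := by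
    rintro π ⟨hπ₀, hπ₁⟩
    have ha : (1 - π) / σ₀ ^ 2 ≠ 0 := (div_pos (sub_pos.2 hπ₁) (by positivity)).ne'
    have hb : π / σ₁ ^ 2 ≠ 0 := (div_pos hπ₀ (by positivity)).ne'
    refine ⟨hM_eq π ▸ isUnit_infoMatrix ha hb, ?_⟩
    rw [hM_eq, hc, dotProduct_infoMatrix_inv_mulVec ha hb]
    field_simp
    ring
  have hA : 0 < (t - 1) * σ₀ := mul_pos (sub_pos.2 ht) hσ₀
  have hB : 0 < t * σ₁ := mul_pos (by linarith) hσ₁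
  have hopt := div_add_mem_Ioo hA hB
  have hmin : c ⬝ᵥ ((M (t * σ₁ / (t * σ₁ + (t - 1) * σ₀)))⁻¹ *ᵥ c)
      = (t * σ₁ + (t - 1) * σ₀) ^ 2 := by
    rw [(hcrit _ hopt).2]
    simpa only [mul_pow] using sq_div_one_sub_add_sq_div_div_add (add_pos hB hA).ne'
  refine ⟨hcrit, hopt, hmin, fun π hπ hne => ?_⟩
  rw [hmin, (hcrit π hπ).2]
  simpa only [mul_pow] using sq_lt_sq_div_one_sub_add_sq_div (add_pos hB hA).ne' hπ hne
end

section
/- Let t* > 1 be real and c = (1, t*)ᵀ ∈ ℝ². Let n ∈ ℕ, let t₁, …, tₙ ∈ [0,1], and let w₁, …, wₙ ≥ 0 with Σᵢ wᵢ = 1. Set f(t) = (1, t)ᵀ and M = Σᵢ wᵢ f(tᵢ)f(tᵢ)ᵀ, and assume M is invertible. Then cᵀ M⁻¹ c ≥ (2t*−1)². -/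
open Matrix

/-- Lower bound for the extrapolation `c`-criterion over all approximate
designs on `[0,1]` for straight-line regression: `cᵀ M⁻¹ c ≥ (2t*−1)²`. -/
theorem c_criterion_lower_bound (t : ℝ) (ht : 1 < t)
    (c : Fin 2 → ℝ) (hc : c = ![1, t])
    (n : ℕ) (ts : Fin n → ℝ) (hts : ∀ i, ts i ∈ Set.Icc (0:ℝ) 1)
    (w : Fin n → ℝ) (hw : ∀ i, 0 ≤ w i) (hsum : ∑ i, w i = 1)
    (f : ℝ → Fin 2 → ℝ) (hf : ∀ s, f s = ![1, s])
    (M : Matrix (Fin 2) (Fin 2) ℝ)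
    (hM : M = ∑ i, w i • vecMulVec (f (ts i)) (f (ts i)))
    (hMinv : IsUnit M) :
    (2 * t - 1)^2 ≤ c ⬝ᵥ (M⁻¹ *ᵥ c) := by
  obtain ⟨b, hb⟩ : ∃ b : ℝ, b = ∑ i, w i * ts i := ⟨_, rfl⟩
  obtain ⟨d, hd⟩ : ∃ d : ℝ, d = ∑ i, w i * (ts i)^2 := ⟨_, rfl⟩
  -- M is the concrete 2×2 matrix
  have hMeq : M = !![1, b; b, d] := by
    ext i j
    fin_cases i <;> fin_cases j <;>
      simp [hM, hf, vecMulVec, Matrix.sum_apply, hb, hd]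
    · simpa using hsum
    · exact Finset.sum_congr rfl (fun i _ => by ring)
  -- d ≤ b since ts i ∈ [0,1]
  have hdb : d ≤ b := by
    rw [hb, hd]
    apply Finset.sum_le_sum
    intro i _
    have h := hts i
    have hwi := hw i
    have h2 : ts i ^ 2 ≤ ts i := by nlinarith [h.1, h.2]
    exact mul_le_mul_of_nonneg_left h2 hwi
  -- b² ≤ d by Cauchy–Schwarz
  have hb2d : b^2 ≤ d := by
    have hcs := Finset.sum_sq_le_sum_mul_sum_of_sq_eq_mul
      (Finset.univ : Finset (Fin n)) (r := fun i => w i * ts i)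
      (f := fun i => w i) (g := fun i => w i * ts i ^ 2)
      (fun i _ => hw i) (fun i _ => mul_nonneg (hw i) (sq_nonneg _))
      (fun i _ => by ring)
    rw [hb, hd]
    calc (∑ i, w i * ts i)^2 ≤ (∑ i, w i) * ∑ i, w i * ts i ^ 2 := hcs
      _ = ∑ i, w i * ts i ^ 2 := by rw [hsum, one_mul]
  -- det M ≠ 0
  have hdet : M.det ≠ 0 := fun h =>
    ((Matrix.isUnit_iff_isUnit_det M).mp hMinv).ne_zero h
  have hdetval : M.det = d - b^2 := by
    rw [hMeq, Matrix.det_fin_two_of]; ring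
  have hdetpos : 0 < d - b^2 :=
    lt_of_le_of_ne (by linarith) (fun h => hdet (by rw [hdetval, ← h]))
  have hne : d - b^2 ≠ 0 := ne_of_gt hdetpos
  -- compute the quadratic form
  have key : (d - b^2) * (d - b^2)⁻¹ = 1 := mul_inv_cancel₀ hne
  have hQ : c ⬝ᵥ (M⁻¹ *ᵥ c) = (t^2 - 2*t*b + d) / (d - b^2) := by
    rw [div_eq_mul_inv, Matrix.inv_def, hMeq, hc, Matrix.det_fin_two_of,
      Matrix.adjugate_fin_two]
    simp [Matrix.mulVec, dotProduct, Fin.sum_univ_two, Ring.inverse_eq_inv']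
    ring
  rw [hQ, le_div_iff₀ hdetpos]
  nlinarith [sq_nonneg ((2*t - 1)*b - t),
    mul_nonneg (by nlinarith : (0:ℝ) ≤ (2*t-1)^2 - 1) (by linarith : (0:ℝ) ≤ b - d)]
end
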